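/- arXiv:1508.03225 — 3 statements merged into one kernel-verified Lean document; each statement's English description precedes it below -/
import Mathlib

section
/- Let ψ ∈ C²(a,b) with ψ'' ≥ −K₁ on (a,b) and ψ' → ±∞ at the endpoints b⁻, a⁺ respectively. Given k* < k⋆ in (a,b), there exist K* ≤ k* and K⋆ ≥ k⋆ in (a,b) with ψ''(K*) ≥ 0 and ψ''(K⋆) ≥ 0. Define the truncation ψ*(r) = ψ(r) for K* ≤ r ≤ K⋆, ψ*(r) = ψ(K⋆) + ψ'(K⋆)(r−K⋆) + ½ψ''(K⋆)(r−K⋆)² for r > K⋆, and ψ*(r) = ψ(K*) + ψ'(K*)(r−K*) + ½ψ''(K*)(r−K*)² for r < K*. Then ψ* ∈ C²(ℝ), ψ*'' ≥ −K₁ on ℝ, and ψ*' is globally Lipschitz with constant L := sup_{r∈ℝ}|ψ*''(r)| < +∞. -/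
open Set

-- derivative of the quadratic extension
private lemma quad_deriv (c0 c1 c2 K : ℝ) (r : ℝ) :
    HasDerivAt (fun r : ℝ => c0 + c1 * (r - K) + (1/2) * c2 * (r - K) ^ 2)
      (c1 + c2 * (r - K)) r := by
  have h1 : HasDerivAt (fun r : ℝ => r - K) 1 r := (hasDerivAt_id r).sub_const K
  have h2 := ((h1.pow 2).const_mul ((1/2) * c2)).const_add c0
  have h3 := (h1.const_mul c1).const_add c0
  have := ((h3.sub_const c0).add (h2.sub_const c0))
  have h4 : HasDerivAt (fun r : ℝ => c0 + (c1 * (r - K) + (1/2) * c2 * (r-K)^2))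
      (c1 * 1 + (1/2)*c2*(↑2 * (r - K) ^ (2-1) * 1)) r :=
    ((h1.const_mul c1).add ((h1.pow 2).const_mul ((1/2)*c2))).const_add c0
  have h5 : c1 * 1 + (1/2)*c2*(↑2 * (r - K) ^ (2-1) * 1) = c1 + c2 * (r - K) := by
    push_cast; ring
  rw [h5] at h4
  convert h4 using 2 with r
  ring

private lemma glue (f g : ℝ → ℝ) (K d : ℝ) (hval : f K = g K)
    (hf : HasDerivWithinAt f d (Iic K) K) (hg : HasDerivWithinAt g d (Ici K) K) :
    HasDerivAt (fun r => if r < K then f r else g r) d K := by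
  have h1 : HasDerivWithinAt (fun r => if r < K then f r else g r) d (Iic K) K := by
    refine hf.congr (fun y hy => ?_) (by simp [hval.symm])
    rcases lt_or_eq_of_le (mem_Iic.mp hy) with h | h
    · simp [h]
    · simp [h, hval.symm]
  have h2 : HasDerivWithinAt (fun r => if r < K then f r else g r) d (Ici K) K := by
    refine hg.congr (fun y hy => ?_) (by simp)
    simp [not_lt.mpr (mem_Ici.mp hy)]
  have h3 := h1.union h2
  rwa [Iic_union_Ici, hasDerivWithinAt_univ] at h3

-- existence of a good left truncation point
private lemma exists_left (a b : EReal) (ψ' ψ'' : ℝ → ℝ)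
    (hderiv2 : ∀ r : ℝ, a < (r : EReal) → (r : EReal) < b → HasDerivAt ψ' (ψ'' r) r)
    (hlim_a : ∀ C : ℝ, ∃ c : ℝ, a < (c : EReal) ∧ (c : EReal) < b ∧
      ∀ r : ℝ, a < (r : EReal) → r ≤ c → ψ' r ≤ C)
    (kst : ℝ) (hkst : a < (kst : EReal)) (hkstb : (kst : EReal) < b) :
    ∃ Kst : ℝ, a < (Kst : EReal) ∧ Kst ≤ kst ∧ 0 ≤ ψ'' Kst := by
  by_contra hcon
  push_neg at hcon
  obtain ⟨c, hac, hcb, hc⟩ := hlim_a (ψ' kst - 1)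
  set r₀ := min c kst with hr₀
  have har₀ : a < (r₀ : EReal) := by
    rcases min_cases c kst with ⟨h, _⟩ | ⟨h, _⟩ <;> rw [hr₀, h] <;> assumption
  have hr₀kst : r₀ ≤ kst := min_le_right _ _
  have hle : ψ' r₀ ≤ ψ' kst - 1 := hc r₀ har₀ (min_le_left _ _)
  have hmem : ∀ x : ℝ, r₀ ≤ x → x ≤ kst → a < (x : EReal) ∧ (x : EReal) < b := fun x h1 h2 =>
    ⟨lt_of_lt_of_le har₀ (EReal.coe_le_coe_iff.mpr h1),
     lt_of_le_of_lt (EReal.coe_le_coe_iff.mpr h2) hkstb⟩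
  rcases eq_or_lt_of_le hr₀kst with heq | hlt
  · rw [heq] at hle; linarith
  · have hanti : StrictAntiOn ψ' (Icc r₀ kst) := by
      refine strictAntiOn_of_deriv_neg (convex_Icc _ _) (fun x hx => ?_) (fun x hx => ?_)
      · obtain ⟨h1, h2⟩ := hmem x hx.1 hx.2
        exact ((hderiv2 x h1 h2).differentiableAt.continuousAt).continuousWithinAt
      · rw [interior_Icc] at hx
        obtain ⟨h1, h2⟩ := hmem x hx.1.le hx.2.le
        rw [(hderiv2 x h1 h2).deriv]
        exact hcon x h1 hx.2.le
    have := hanti (left_mem_Icc.mpr hr₀kst) (right_mem_Icc.mpr hr₀kst) hlt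
    linarith

private lemma exists_right (a b : EReal) (ψ' ψ'' : ℝ → ℝ)
    (hderiv2 : ∀ r : ℝ, a < (r : EReal) → (r : EReal) < b → HasDerivAt ψ' (ψ'' r) r)
    (hlim_b : ∀ C : ℝ, ∃ c : ℝ, a < (c : EReal) ∧ (c : EReal) < b ∧
      ∀ r : ℝ, (r : EReal) < b → c ≤ r → C ≤ ψ' r)
    (kstar : ℝ) (hkst : a < (kstar : EReal)) (hkstb : (kstar : EReal) < b) :
    ∃ Kstar : ℝ, (Kstar : EReal) < b ∧ kstar ≤ Kstar ∧ 0 ≤ ψ'' Kstar := by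
  by_contra hcon
  push_neg at hcon
  obtain ⟨c, hac, hcb, hc⟩ := hlim_b (ψ' kstar + 1)
  set r₁ := max c kstar with hr₁
  have hbr₁ : (r₁ : EReal) < b := by
    rcases max_cases c kstar with ⟨h, _⟩ | ⟨h, _⟩ <;> rw [hr₁, h] <;> assumption
  have hr₁kstar : kstar ≤ r₁ := le_max_right _ _
  have hle : ψ' kstar + 1 ≤ ψ' r₁ := hc r₁ hbr₁ (le_max_left _ _)
  have hmem : ∀ x : ℝ, kstar ≤ x → x ≤ r₁ → a < (x : EReal) ∧ (x : EReal) < b := fun x h1 h2 =>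
    ⟨lt_of_lt_of_le hkst (EReal.coe_le_coe_iff.mpr h1),
     lt_of_le_of_lt (EReal.coe_le_coe_iff.mpr h2) hbr₁⟩
  rcases eq_or_lt_of_le hr₁kstar with heq | hlt
  · rw [← heq] at hle; linarith
  · have hanti : StrictAntiOn ψ' (Icc kstar r₁) := by
      refine strictAntiOn_of_deriv_neg (convex_Icc _ _) (fun x hx => ?_) (fun x hx => ?_)
      · obtain ⟨h1, h2⟩ := hmem x hx.1 hx.2
        exact ((hderiv2 x h1 h2).differentiableAt.continuousAt).continuousWithinAt
      · rw [interior_Icc] at hx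
        obtain ⟨h1, h2⟩ := hmem x hx.1.le hx.2.le
        rw [(hderiv2 x h1 h2).deriv]
        exact hcon x h2 hx.1.le
    have := hanti (left_mem_Icc.mpr hr₁kstar) (right_mem_Icc.mpr hr₁kstar) hlt
    linarith

/-- for ψ ∈ C²(a,b) with ψ'' ≥ −K₁ and ψ' blowing up at the
endpoints, and k⋆ < k⋆⋆ in (a,b), there are truncation points K⋆ ≤ k⋆,
K⋆⋆ ≥ k⋆⋆ in (a,b) with ψ''(K⋆) ≥ 0 and ψ''(K⋆⋆) ≥ 0 such that the quadratic
extension ψ⋆ of ψ outside [K⋆,K⋆⋆] is C² on all of ℝ, satisfies ψ⋆'' ≥ −K₁,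
and has a globally Lipschitz derivative with constant L = sup|ψ⋆''| < ∞. -/
theorem stmt8 (a b : EReal) (hab : a < b)
    (ψ ψ' ψ'' : ℝ → ℝ) (K₁ : ℝ) (hK₁ : 0 < K₁)
    (hderiv : ∀ r : ℝ, a < (r : EReal) → (r : EReal) < b → HasDerivAt ψ (ψ' r) r)
    (hderiv2 : ∀ r : ℝ, a < (r : EReal) → (r : EReal) < b → HasDerivAt ψ' (ψ'' r) r)
    (hcont2 : ContinuousOn ψ'' {r : ℝ | a < (r : EReal) ∧ (r : EReal) < b})
    (hlower : ∀ r : ℝ, a < (r : EReal) → (r : EReal) < b → -K₁ ≤ ψ'' r)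
    (hlim_a : ∀ C : ℝ, ∃ c : ℝ, a < (c : EReal) ∧ (c : EReal) < b ∧
      ∀ r : ℝ, a < (r : EReal) → r ≤ c → ψ' r ≤ C)
    (hlim_b : ∀ C : ℝ, ∃ c : ℝ, a < (c : EReal) ∧ (c : EReal) < b ∧
      ∀ r : ℝ, (r : EReal) < b → c ≤ r → C ≤ ψ' r)
    (kst kstar : ℝ) (hk : kst < kstar)
    (hkst : a < (kst : EReal)) (hkstar : (kstar : EReal) < b) :
    ∃ Kst Kstar : ℝ,
      a < (Kst : EReal) ∧ (Kstar : EReal) < b ∧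
      Kst ≤ kst ∧ kstar ≤ Kstar ∧
      0 ≤ ψ'' Kst ∧ 0 ≤ ψ'' Kstar ∧
      ∀ ψs : ℝ → ℝ,
        (∀ r : ℝ, ψs r =
          if r < Kst then
            ψ Kst + ψ' Kst * (r - Kst) + (1 / 2) * ψ'' Kst * (r - Kst) ^ 2
          else if r ≤ Kstar then ψ r
          else
            ψ Kstar + ψ' Kstar * (r - Kstar) + (1 / 2) * ψ'' Kstar * (r - Kstar) ^ 2) →
        ContDiff ℝ 2 ψs ∧
        (∀ r : ℝ, -K₁ ≤ iteratedDeriv 2 ψs r) ∧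
        ∃ L : ℝ, 0 ≤ L ∧ L = ⨆ r : ℝ, |iteratedDeriv 2 ψs r| ∧
          (∀ r : ℝ, |iteratedDeriv 2 ψs r| ≤ L) ∧
          LipschitzWith L.toNNReal (deriv ψs) := by
  have hkstb : (kst : EReal) < b := lt_trans (EReal.coe_lt_coe_iff.mpr hk) hkstar
  have hakstar : a < (kstar : EReal) := lt_trans hkst (EReal.coe_lt_coe_iff.mpr hk)
  obtain ⟨Kst, haK, hKk, hK0⟩ := exists_left a b ψ' ψ'' hderiv2 hlim_a kst hkst hkstb
  obtain ⟨Kstar, hKb, hkK, hK0'⟩ := exists_right a b ψ' ψ'' hderiv2 hlim_b kstar hakstar hkstar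
  have hKK : Kst < Kstar := lt_of_le_of_lt hKk (lt_of_lt_of_le hk hkK)
  refine ⟨Kst, Kstar, haK, hKb, hKk, hkK, hK0, hK0', ?_⟩
  intro ψs hψs
  -- membership in (a,b) for points of [Kst, Kstar]
  have hmem : ∀ x : ℝ, Kst ≤ x → x ≤ Kstar → a < (x : EReal) ∧ (x : EReal) < b := fun x h1 h2 =>
    ⟨lt_of_lt_of_le haK (EReal.coe_le_coe_iff.mpr h1),
     lt_of_le_of_lt (EReal.coe_le_coe_iff.mpr h2) hKb⟩
  set q : ℝ → ℝ := fun r => ψ Kst + ψ' Kst * (r - Kst) + (1/2) * ψ'' Kst * (r - Kst) ^ 2 with hq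
  set Q : ℝ → ℝ := fun r => ψ Kstar + ψ' Kstar * (r - Kstar) + (1/2) * ψ'' Kstar * (r - Kstar) ^ 2
    with hQ
  set ψs1 : ℝ → ℝ := fun r =>
    if r < Kst then ψ' Kst + ψ'' Kst * (r - Kst)
    else if r ≤ Kstar then ψ' r
    else ψ' Kstar + ψ'' Kstar * (r - Kstar) with hψs1
  set ψs2 : ℝ → ℝ := fun r => ψ'' (max Kst (min Kstar r)) with hψs2
  -- pointwise description of ψs2
  have hψs2lt : ∀ r : ℝ, r < Kst → ψs2 r = ψ'' Kst := by
    intro r hr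
    rw [hψs2]
    simp only [min_eq_right (le_of_lt (lt_trans hr hKK)), max_eq_left (le_of_lt hr)]
  have hψs2mid : ∀ r : ℝ, Kst ≤ r → r ≤ Kstar → ψs2 r = ψ'' r := by
    intro r h1 h2
    rw [hψs2]
    simp only [min_eq_right h2, max_eq_right h1]
  have hψs2gt : ∀ r : ℝ, Kstar < r → ψs2 r = ψ'' Kstar := by
    intro r hr
    rw [hψs2]
    simp only [min_eq_left (le_of_lt hr), max_eq_right (le_of_lt hKK)]
  -- first derivative of ψs
  have H1 : ∀ r : ℝ, HasDerivAt ψs (ψs1 r) r := by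
    intro r
    rcases lt_trichotomy r Kst with hr | hr | hr
    · have he : ψs =ᶠ[nhds r] q := by
        filter_upwards [Iio_mem_nhds hr] with y hy
        have hy' : y < Kst := hy
        rw [hψs y, if_pos hy', hq]
      have hd := (quad_deriv (ψ Kst) (ψ' Kst) (ψ'' Kst) Kst r).congr_of_eventuallyEq (hq ▸ he)
      have heval : ψs1 r = ψ' Kst + ψ'' Kst * (r - Kst) := by
        simp only [hψs1]; rw [if_pos hr]
      rwa [heval]
    · rw [hr]
      have he : ψs =ᶠ[nhds Kst] fun y => if y < Kst then q y else ψ y := by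
        filter_upwards [Iio_mem_nhds hKK] with y hy
        have hy' : y < Kstar := hy
        show ψs y = if y < Kst then q y else ψ y
        by_cases h : y < Kst
        · rw [hψs y, if_pos h, if_pos h, hq]
        · rw [hψs y, if_neg h, if_neg h, if_pos hy'.le]
      have hval : q Kst = ψ Kst := by rw [hq]; simp
      obtain ⟨h1, h2⟩ := hmem Kst le_rfl hKK.le
      have hf : HasDerivWithinAt q (ψ' Kst) (Iic Kst) Kst := by
        have h0 := (quad_deriv (ψ Kst) (ψ' Kst) (ψ'' Kst) Kst Kst).hasDerivWithinAt
          (s := Iic Kst)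
        rw [hq]; simpa using h0
      have hg : HasDerivWithinAt ψ (ψ' Kst) (Ici Kst) Kst := (hderiv Kst h1 h2).hasDerivWithinAt
      have hd := (glue q ψ Kst (ψ' Kst) hval hf hg).congr_of_eventuallyEq he
      have heval : ψs1 Kst = ψ' Kst := by
        simp only [hψs1]; rw [if_neg (lt_irrefl Kst), if_pos hKK.le]
      rwa [heval]
    · rcases lt_trichotomy r Kstar with hr2 | hr2 | hr2
      · have he : ψs =ᶠ[nhds r] ψ := by
          filter_upwards [Ioo_mem_nhds hr hr2] with y hy
          rw [hψs y, if_neg (not_lt.mpr hy.1.le), if_pos hy.2.le]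
        obtain ⟨h1, h2⟩ := hmem r hr.le hr2.le
        have hd := (hderiv r h1 h2).congr_of_eventuallyEq he
        have heval : ψs1 r = ψ' r := by
          simp only [hψs1]; rw [if_neg (not_lt.mpr hr.le), if_pos hr2.le]
        rwa [heval]
      · rw [hr2]
        have he : ψs =ᶠ[nhds Kstar] fun y => if y < Kstar then ψ y else Q y := by
          filter_upwards [Ioi_mem_nhds hKK] with y hy
          have hy' : Kst < y := hy
          show ψs y = if y < Kstar then ψ y else Q y
          by_cases h : y < Kstar
          · rw [hψs y, if_neg (not_lt.mpr hy'.le), if_pos h.le, if_pos h]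
          · rcases eq_or_lt_of_le (not_lt.mp h) with h' | h'
            · have hy2 : y = Kstar := h'.symm
              rw [hψs y, hy2, if_neg (not_lt.mpr hKK.le), if_pos le_rfl,
                if_neg (lt_irrefl Kstar), hQ]
              simp
            · rw [hψs y, if_neg (not_lt.mpr hy'.le), if_neg (not_le.mpr h'), if_neg h, hQ]
        have hval : ψ Kstar = Q Kstar := by rw [hQ]; simp
        obtain ⟨h1, h2⟩ := hmem Kstar hKK.le le_rfl
        have hg : HasDerivWithinAt Q (ψ' Kstar) (Ici Kstar) Kstar := by
          have h0 := (quad_deriv (ψ Kstar) (ψ' Kstar) (ψ'' Kstar) Kstar Kstar).hasDerivWithinAt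
            (s := Ici Kstar)
          rw [hQ]; simpa using h0
        have hf : HasDerivWithinAt ψ (ψ' Kstar) (Iic Kstar) Kstar :=
          (hderiv Kstar h1 h2).hasDerivWithinAt
        have hd := (glue ψ Q Kstar (ψ' Kstar) hval hf hg).congr_of_eventuallyEq he
        have heval : ψs1 Kstar = ψ' Kstar := by
          simp only [hψs1]; rw [if_neg (not_lt.mpr hKK.le), if_pos le_rfl]
        rwa [heval]
      · have he : ψs =ᶠ[nhds r] Q := by
          filter_upwards [Ioi_mem_nhds hr2] with y hy
          have hy' : Kstar < y := hy
          rw [hψs y, if_neg (not_lt.mpr (lt_trans hKK hy').le), if_neg (not_le.mpr hy'), hQ]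
        have hd := (quad_deriv (ψ Kstar) (ψ' Kstar) (ψ'' Kstar) Kstar r).congr_of_eventuallyEq
          (hQ ▸ he)
        have heval : ψs1 r = ψ' Kstar + ψ'' Kstar * (r - Kstar) := by
          simp only [hψs1]
          rw [if_neg (not_lt.mpr (lt_trans hKK hr2).le), if_neg (not_le.mpr hr2)]
        rwa [heval]
  -- second derivative
  have lin_deriv : ∀ (c1 c2 K r : ℝ), HasDerivAt (fun y => c1 + c2 * (y - K)) c2 r := by
    intro c1 c2 K r
    have h1 : HasDerivAt (fun y : ℝ => y - K) 1 r := (hasDerivAt_id r).sub_const K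
    have := (h1.const_mul c2).const_add c1
    simpa using this
  have H2 : ∀ r : ℝ, HasDerivAt ψs1 (ψs2 r) r := by
    intro r
    rcases lt_trichotomy r Kst with hr | hr | hr
    · have he : ψs1 =ᶠ[nhds r] fun y => ψ' Kst + ψ'' Kst * (y - Kst) := by
        filter_upwards [Iio_mem_nhds hr] with y hy
        have hy' : y < Kst := hy
        show ψs1 y = ψ' Kst + ψ'' Kst * (y - Kst)
        simp only [hψs1]; rw [if_pos hy']
      have hd := (lin_deriv (ψ' Kst) (ψ'' Kst) Kst r).congr_of_eventuallyEq he
      rwa [hψs2lt r hr]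
    · rw [hr]
      have he : ψs1 =ᶠ[nhds Kst]
          fun y => if y < Kst then ψ' Kst + ψ'' Kst * (y - Kst) else ψ' y := by
        filter_upwards [Iio_mem_nhds hKK] with y hy
        have hy' : y < Kstar := hy
        show ψs1 y = if y < Kst then ψ' Kst + ψ'' Kst * (y - Kst) else ψ' y
        by_cases h : y < Kst
        · simp only [hψs1]; rw [if_pos h, if_pos h]
        · simp only [hψs1]; rw [if_neg h, if_neg h, if_pos hy'.le]
      obtain ⟨h1, h2⟩ := hmem Kst le_rfl hKK.le
      have hf : HasDerivWithinAt (fun y => ψ' Kst + ψ'' Kst * (y - Kst)) (ψ'' Kst)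
          (Iic Kst) Kst := (lin_deriv (ψ' Kst) (ψ'' Kst) Kst Kst).hasDerivWithinAt
      have hg : HasDerivWithinAt ψ' (ψ'' Kst) (Ici Kst) Kst :=
        (hderiv2 Kst h1 h2).hasDerivWithinAt
      have hval : ψ' Kst + ψ'' Kst * (Kst - Kst) = ψ' Kst := by ring
      have hd := (glue _ ψ' Kst (ψ'' Kst) hval hf hg).congr_of_eventuallyEq he
      rwa [hψs2mid Kst le_rfl hKK.le]
    · rcases lt_trichotomy r Kstar with hr2 | hr2 | hr2
      · have he : ψs1 =ᶠ[nhds r] ψ' := by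
          filter_upwards [Ioo_mem_nhds hr hr2] with y hy
          show ψs1 y = ψ' y
          simp only [hψs1]; rw [if_neg (not_lt.mpr hy.1.le), if_pos hy.2.le]
        obtain ⟨h1, h2⟩ := hmem r hr.le hr2.le
        have hd := (hderiv2 r h1 h2).congr_of_eventuallyEq he
        rwa [hψs2mid r hr.le hr2.le]
      · rw [hr2]
        have he : ψs1 =ᶠ[nhds Kstar]
            fun y => if y < Kstar then ψ' y else ψ' Kstar + ψ'' Kstar * (y - Kstar) := by
          filter_upwards [Ioi_mem_nhds hKK] with y hy
          have hy' : Kst < y := hy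
          show ψs1 y = if y < Kstar then ψ' y else ψ' Kstar + ψ'' Kstar * (y - Kstar)
          by_cases h : y < Kstar
          · simp only [hψs1]; rw [if_neg (not_lt.mpr hy'.le), if_pos h.le, if_pos h]
          · rcases eq_or_lt_of_le (not_lt.mp h) with h' | h'
            · have hy2 : y = Kstar := h'.symm
              simp only [hψs1, hy2]
              rw [if_neg (not_lt.mpr hKK.le), if_pos le_rfl, if_neg (lt_irrefl Kstar)]
              ring
            · simp only [hψs1]
              rw [if_neg (not_lt.mpr hy'.le), if_neg (not_le.mpr h'), if_neg h]
        obtain ⟨h1, h2⟩ := hmem Kstar hKK.le le_rfl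
        have hg : HasDerivWithinAt (fun y => ψ' Kstar + ψ'' Kstar * (y - Kstar)) (ψ'' Kstar)
            (Ici Kstar) Kstar := (lin_deriv (ψ' Kstar) (ψ'' Kstar) Kstar Kstar).hasDerivWithinAt
        have hf : HasDerivWithinAt ψ' (ψ'' Kstar) (Iic Kstar) Kstar :=
          (hderiv2 Kstar h1 h2).hasDerivWithinAt
        have hval : ψ' Kstar = ψ' Kstar + ψ'' Kstar * (Kstar - Kstar) := by ring
        have hd := (glue ψ' _ Kstar (ψ'' Kstar) hval hf hg).congr_of_eventuallyEq he
        rwa [hψs2mid Kstar hKK.le le_rfl]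
      · have he : ψs1 =ᶠ[nhds r] fun y => ψ' Kstar + ψ'' Kstar * (y - Kstar) := by
          filter_upwards [Ioi_mem_nhds hr2] with y hy
          have hy' : Kstar < y := hy
          show ψs1 y = ψ' Kstar + ψ'' Kstar * (y - Kstar)
          simp only [hψs1]
          rw [if_neg (not_lt.mpr (lt_trans hKK hy').le), if_neg (not_le.mpr hy')]
        have hd := (lin_deriv (ψ' Kstar) (ψ'' Kstar) Kstar r).congr_of_eventuallyEq he
        rwa [hψs2gt r hr2]
  -- continuity of ψs2
  have hclamp : ∀ r : ℝ, max Kst (min Kstar r) ∈ {r : ℝ | a < (r : EReal) ∧ (r : EReal) < b} :=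
    fun r => hmem _ (le_max_left _ _) (max_le hKK.le (min_le_left _ _))
  have H2cont : Continuous ψs2 := by
    rw [hψs2]
    exact hcont2.comp_continuous
      (continuous_const.max (continuous_const.min continuous_id)) hclamp
  have hd1 : deriv ψs = ψs1 := funext fun r => (H1 r).deriv
  have hd2 : deriv ψs1 = ψs2 := funext fun r => (H2 r).deriv
  have hdiff : Differentiable ℝ ψs := fun r => (H1 r).differentiableAt
  have hdiff1 : Differentiable ℝ ψs1 := fun r => (H2 r).differentiableAt
  have hiter : iteratedDeriv 2 ψs = ψs2 := by
    rw [show (2 : ℕ) = 1 + 1 from rfl, iteratedDeriv_succ, iteratedDeriv_one, hd1, hd2]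
  -- boundedness of |ψs2|
  have hbdd : BddAbove (Set.range fun r => |ψs2 r|) := by
    have hsub : (Set.range fun r => |ψs2 r|) ⊆ (fun t => |ψ'' t|) '' Icc Kst Kstar := by
      rintro x ⟨r, rfl⟩
      exact ⟨max Kst (min Kstar r),
        ⟨le_max_left _ _, max_le hKK.le (min_le_left _ _)⟩, rfl⟩
    have hcomp : IsCompact ((fun t => |ψ'' t|) '' Icc Kst Kstar) := by
      refine isCompact_Icc.image_of_continuousOn ?_
      exact (hcont2.mono (fun x hx => hmem x hx.1 hx.2)).abs
    exact hcomp.bddAbove.mono hsub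
  set L : ℝ := ⨆ r : ℝ, |ψs2 r| with hL
  have hLub : ∀ r : ℝ, |ψs2 r| ≤ L := fun r => le_ciSup hbdd r
  have hL0 : 0 ≤ L := le_trans (abs_nonneg _) (hLub 0)
  refine ⟨?_, ?_, L, hL0, by rw [hiter], by rw [hiter]; exact hLub, ?_⟩
  · rw [show (2 : WithTop ℕ∞) = 1 + 1 from rfl, contDiff_succ_iff_deriv]
    refine ⟨hdiff, by simp, ?_⟩
    rw [hd1, contDiff_one_iff_deriv]
    exact ⟨hdiff1, hd2 ▸ H2cont⟩
  · intro r
    rw [hiter]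
    obtain ⟨h1, h2⟩ := hclamp r
    exact hlower _ h1 h2
  · rw [hd1]
    refine lipschitzWith_of_nnnorm_deriv_le hdiff1 (fun x => ?_)
    rw [hd2, ← NNReal.coe_le_coe, coe_nnnorm, Real.norm_eq_abs, Real.coe_toNNReal _ hL0]
    exact hLub x
end

section
/- Let β be maximal monotone on ℝ with 0 ∈ β(0) and let ψ*' be L-Lipschitz. For v₁, v₂ ∈ C([0,T]; L²(Ω)), let uᵢ satisfy ∂ₜuᵢ(t) = (I+β)⁻¹(μᵢ(t) − μ_♭(t) − ψ*'(vᵢ(t))) and the coupled elliptic equations Aμᵢ(t) + (I+β)⁻¹(μᵢ(t) − μ_♭(t) − ψ*'(vᵢ(t))) = 0 with the same initial datum uᵢ(0) = u₀. Then ‖∂ₜ(u₁−u₂)(t)‖_{L²} ≤ L‖(v₁−v₂)(t)‖_{L²} for all t ∈ [0,T]. -/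
open scoped RealInnerProductSpace

/-- abstract L²(Ω) formulation: H is a real Hilbert space
(= L²(Ω)); 𝒥 is the (pointwise) resolvent (I+β)⁻¹ of a maximal monotone β with
0 ∈ β(0), encoded through 𝒥 0 = 0 and monotonicity of β, i.e.
⟪(a − 𝒥a) − (b − 𝒥b), 𝒥a − 𝒥b⟫ ≥ 0; 𝒜 is the (monotone) weak Dirichlet
Laplacian A; Ψ is the Nemytskii operator of the L-Lipschitz ψ⋆'.  If
∂ₜuᵢ = 𝒥(μᵢ − μb − Ψ(vᵢ)) and 𝒜μᵢ + ∂ₜuᵢ = 0 with u₁(0) = u₂(0) = u₀, then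
‖∂ₜ(u₁−u₂)(t)‖ ≤ L‖(v₁−v₂)(t)‖ for all t ∈ [0,T]. -/
theorem stmt15 {H : Type*} [NormedAddCommGroup H] [InnerProductSpace ℝ H]
    [CompleteSpace H]
    (T L : ℝ) (hT : 0 < T) (hL : 0 < L)
    (𝒥 : H → H) (h𝒥0 : 𝒥 0 = 0)
    (h𝒥mono : ∀ a b : H, 0 ≤ ⟪(a - 𝒥 a) - (b - 𝒥 b), 𝒥 a - 𝒥 b⟫)
    (𝒜 : H → H) (h𝒜mono : ∀ x y : H, 0 ≤ ⟪𝒜 x - 𝒜 y, x - y⟫)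
    (Ψ : H → H) (hΨ : LipschitzWith (Real.toNNReal L) Ψ)
    (μb v₁ v₂ u₁ u₂ du₁ du₂ μ₁ μ₂ : ℝ → H) (u₀ : H)
    (hd₁ : ∀ t ∈ Set.Icc (0:ℝ) T, HasDerivAt u₁ (du₁ t) t)
    (hd₂ : ∀ t ∈ Set.Icc (0:ℝ) T, HasDerivAt u₂ (du₂ t) t)
    (heq₁ : ∀ t ∈ Set.Icc (0:ℝ) T, du₁ t = 𝒥 (μ₁ t - μb t - Ψ (v₁ t)))
    (heq₂ : ∀ t ∈ Set.Icc (0:ℝ) T, du₂ t = 𝒥 (μ₂ t - μb t - Ψ (v₂ t)))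
    (hell₁ : ∀ t ∈ Set.Icc (0:ℝ) T, 𝒜 (μ₁ t) + du₁ t = 0)
    (hell₂ : ∀ t ∈ Set.Icc (0:ℝ) T, 𝒜 (μ₂ t) + du₂ t = 0)
    (hinit : u₁ 0 = u₀ ∧ u₂ 0 = u₀) :
    ∀ t ∈ Set.Icc (0:ℝ) T, ‖du₁ t - du₂ t‖ ≤ L * ‖v₁ t - v₂ t‖ := by
  intro t ht
  set a := μ₁ t - μb t - Ψ (v₁ t) with ha
  set b := μ₂ t - μb t - Ψ (v₂ t) with hb
  have e1 : du₁ t = 𝒥 a := heq₁ t ht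
  have e2 : du₂ t = 𝒥 b := heq₂ t ht
  set w := 𝒥 a - 𝒥 b with hw
  have hdw : du₁ t - du₂ t = w := by rw [e1, e2]
  rw [hdw]
  -- elliptic part: ⟪w, μ₁ t - μ₂ t⟫ ≤ 0
  have hA1 : 𝒜 (μ₁ t) = -du₁ t := eq_neg_of_add_eq_zero_left (hell₁ t ht)
  have hA2 : 𝒜 (μ₂ t) = -du₂ t := eq_neg_of_add_eq_zero_left (hell₂ t ht)
  have hμ : ⟪μ₁ t - μ₂ t, w⟫ ≤ 0 := by
    have hA := h𝒜mono (μ₁ t) (μ₂ t)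
    rw [hA1, hA2] at hA
    have : 𝒜 (μ₁ t) - 𝒜 (μ₂ t) = -w := by rw [hA1, hA2, e1, e2, neg_sub_neg, ← neg_sub, ← hw]
    have hA' := h𝒜mono (μ₁ t) (μ₂ t)
    rw [this, inner_neg_left] at hA'
    rw [real_inner_comm]
    linarith
  -- monotonicity of β: ‖w‖² ≤ ⟪a - b, w⟫
  have hmono := h𝒥mono a b
  have hsplit : (a - 𝒥 a) - (b - 𝒥 b) = (a - b) - w := by rw [hw]; abel
  rw [hsplit, inner_sub_left] at hmono
  have hab : a - b = (μ₁ t - μ₂ t) - (Ψ (v₁ t) - Ψ (v₂ t)) := by rw [ha, hb]; abel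
  rw [hab, inner_sub_left] at hmono
  have hcs : ⟪-(Ψ (v₁ t) - Ψ (v₂ t)), w⟫ ≤ ‖Ψ (v₁ t) - Ψ (v₂ t)‖ * ‖w‖ := by
    calc ⟪-(Ψ (v₁ t) - Ψ (v₂ t)), w⟫ ≤ ‖-(Ψ (v₁ t) - Ψ (v₂ t))‖ * ‖w‖ := real_inner_le_norm _ _
    _ = ‖Ψ (v₁ t) - Ψ (v₂ t)‖ * ‖w‖ := by rw [norm_neg]
  rw [inner_neg_left] at hcs
  have hLip : ‖Ψ (v₁ t) - Ψ (v₂ t)‖ ≤ L * ‖v₁ t - v₂ t‖ := by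
    have := hΨ.dist_le_mul (v₁ t) (v₂ t)
    rw [dist_eq_norm, dist_eq_norm] at this
    rwa [Real.coe_toNNReal L hL.le] at this
  have hww : ⟪w, w⟫ = ‖w‖ ^ 2 := real_inner_self_eq_norm_sq w
  have key : ‖w‖ ^ 2 ≤ L * ‖v₁ t - v₂ t‖ * ‖w‖ := by nlinarith [norm_nonneg w]
  nlinarith [norm_nonneg w, mul_nonneg hL.le (norm_nonneg (v₁ t - v₂ t)), key]
end

section
/- Let β be maximal monotone on ℝ with 0 ∈ β(0), Ω a bounded smooth domain, A : W → L²(Ω) the Dirichlet Laplacian restricted to W = H²(Ω) ∩ H₀¹(Ω), and h ∈ L²(Ω). Then there exists a unique μ ∈ W solving Aμ + (I+β)⁻¹(μ − h) = 0; existence follows since the sum of the maximal monotone coercive operator A and the monotone Lipschitz operator v ↦ (I+β)⁻¹(v − h) is maximal monotone and surjective, and uniqueness follows from strong monotonicity of A. -/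
open scoped RealInnerProductSpace

set_option maxHeartbeats 1000000 in

/-- abstract formulation: H is a real Hilbert space (= L²(Ω)),
W ⊆ H a subspace (= H²(Ω) ∩ H₀¹(Ω)), A : W → H a linear operator (the Dirichlet
Laplacian) which is strongly monotone (coercive, via the Poincaré inequality)
and maximal monotone as a graph in H × H, and 𝒥 = (I+β)⁻¹ : H → H the pointwise
resolvent of a maximal monotone β with 0 ∈ β(0), hence monotone and 1-Lipschitz
with 𝒥 0 = 0.  Then for every h ∈ H there is a unique μ ∈ W solving
Aμ + 𝒥(μ − h) = 0. -/
theorem stmt18 {H : Type*} [NormedAddCommGroup H] [InnerProductSpace ℝ H]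
    [CompleteSpace H]
    (W : Submodule ℝ H) (A : W →ₗ[ℝ] H)
    (c : ℝ) (hc : 0 < c)
    (hstrong : ∀ v : W, c * ‖(v : H)‖ ^ 2 ≤ ⟪A v, (v : H)⟫)
    (hmaxmono : ∀ x ξ : H, (∀ v : W, 0 ≤ ⟪ξ - A v, x - (v : H)⟫) →
      ∃ v : W, (v : H) = x ∧ A v = ξ)
    (𝒥 : H → H) (h𝒥0 : 𝒥 0 = 0)
    (h𝒥mono : ∀ a b : H, 0 ≤ ⟪𝒥 a - 𝒥 b, a - b⟫)
    (h𝒥lip : LipschitzWith 1 𝒥)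
    (h : H) :
    ∃! μ : W, A μ + 𝒥 ((μ : H) - h) = 0 := by
  classical
  -- monotonicity of A with strong constant, in subtraction form
  have hAsm : ∀ v w : W, c * ‖(v : H) - (w : H)‖ ^ 2 ≤ ⟪A v - A w, (v : H) - (w : H)⟫ := by
    intro v w
    have := hstrong (v - w)
    simpa [map_sub] using this
  have hAmono : ∀ v w : W, 0 ≤ ⟪A v - A w, (v : H) - (w : H)⟫ := by
    intro v w
    refine le_trans ?_ (hAsm v w)
    positivity
  -- the parameter l
  set l : ℝ := min c 1 with hl_def
  have hl : 0 < l := lt_min hc one_pos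
  have hlc : l ≤ c := min_le_left _ _
  have hl1 : l ≤ 1 := min_le_right _ _
  -- the operator S = I + l A
  set S : W →ₗ[ℝ] H := W.subtype + l • A with hS_def
  have hS : ∀ v : W, S v = (v : H) + l • A v := fun v => rfl
  have hSsub : ∀ v w : W, S v - S w = ((v : H) - w) + l • (A v - A w) := by
    intro v w
    simp [hS, smul_sub]
    abel
  -- strong monotonicity of S
  have hSsm : ∀ v w : W, (1 + l * c) * ‖(v : H) - (w : H)‖ ^ 2 ≤ ⟪S v - S w, (v : H) - (w : H)⟫ := by
    intro v w
    rw [hSsub]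
    rw [inner_add_left, real_inner_smul_left, real_inner_self_eq_norm_sq]
    have h1 : l * (c * ‖(v : H) - (w : H)‖ ^ 2) ≤ l * ⟪A v - A w, (v : H) - (w : H)⟫ :=
      mul_le_mul_of_nonneg_left (hAsm v w) hl.le
    nlinarith [hAsm v w]
  have h1lc : (0:ℝ) < 1 + l * c := by positivity
  -- norm contraction estimate for S
  have hSnorm : ∀ v w : W, (1 + l * c) * ‖(v : H) - (w : H)‖ ≤ ‖S v - S w‖ := by
    intro v w
    rcases eq_or_ne ((v : H) - w) 0 with h0 | h0
    · simp only [h0, norm_zero, mul_zero]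
      positivity
    · have hn : 0 < ‖(v : H) - (w : H)‖ := by
        simpa [norm_pos_iff] using h0
      have h2 : ⟪S v - S w, (v : H) - (w : H)⟫ ≤ ‖S v - S w‖ * ‖(v : H) - (w : H)‖ :=
        real_inner_le_norm _ _
      have := le_trans (hSsm v w) h2
      rw [pow_two] at this
      nlinarith
  -- surjectivity of S
  have hSsurj : ∀ y : H, ∃ v : W, S v = y := by
    -- range of S is closed
    have hclosed : IsClosed ((LinearMap.range S : Submodule ℝ H) : Set H) := by
      rw [← closure_subset_iff_isClosed]
      intro y hy
      rw [mem_closure_iff_seq_limit] at hy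
      obtain ⟨u, hu, hulim⟩ := hy
      choose v hv using hu
      -- v is Cauchy
      have hvc : CauchySeq (fun n => (v n : H)) := by
        have huc : CauchySeq u := hulim.cauchySeq
        rw [Metric.cauchySeq_iff] at huc ⊢
        intro ε hε
        obtain ⟨N, hN⟩ := huc ((1 + l * c) * ε) (by positivity)
        refine ⟨N, fun m hm n hn => ?_⟩
        have h1 := hSnorm (v m) (v n)
        rw [hv m, hv n] at h1
        have h2 := hN m hm n hn
        rw [dist_eq_norm] at h2 ⊢
        nlinarith
      obtain ⟨x, hx⟩ := cauchySeq_tendsto_of_complete hvc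
      -- A (v n) converges
      have hAv : Filter.Tendsto (fun n => A (v n)) Filter.atTop (nhds (l⁻¹ • (y - x))) := by
        have : ∀ n, A (v n) = l⁻¹ • (u n - (v n : H)) := by
          intro n
          have := hv n
          rw [hS] at this
          rw [← this, add_sub_cancel_left, inv_smul_smul₀ hl.ne']
        simp only [this]
        exact ((hulim.sub hx)).const_smul _
      -- monotone relation in the limit
      have hrel : ∀ w : W, 0 ≤ ⟪l⁻¹ • (y - x) - A w, x - (w : H)⟫ := by
        intro w
        have htend : Filter.Tendsto (fun n => ⟪A (v n) - A w, (v n : H) - (w : H)⟫)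
            Filter.atTop (nhds ⟪l⁻¹ • (y - x) - A w, x - (w : H)⟫) :=
          Filter.Tendsto.inner (hAv.sub tendsto_const_nhds) (hx.sub tendsto_const_nhds)
        exact ge_of_tendsto htend (Filter.Eventually.of_forall fun n => hAmono (v n) w)
      obtain ⟨w, hwx, hwA⟩ := hmaxmono x (l⁻¹ • (y - x)) hrel
      refine ⟨w, ?_⟩
      rw [hS, hwx, hwA, smul_smul, mul_inv_cancel₀ hl.ne', one_smul]
      abel
    haveI : CompleteSpace (LinearMap.range S : Submodule ℝ H) := hclosed.completeSpace_coe
    have htop : (LinearMap.range S : Submodule ℝ H) = ⊤ := by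
      rw [← Submodule.orthogonal_eq_bot_iff]
      rw [Submodule.eq_bot_iff]
      intro z hz
      rw [Submodule.mem_orthogonal] at hz
      have hz' : ∀ v : W, ⟪S v, z⟫ = 0 := fun v => hz (S v) (LinearMap.mem_range_self S v)
      have hrel : ∀ v : W, 0 ≤ ⟪l⁻¹ • z - A v, z - (v : H)⟫ := by
        intro v
        have h1 : ⟪(v : H), z⟫ + l * ⟪A v, z⟫ = 0 := by
          have := hz' v
          rw [hS, inner_add_left, real_inner_smul_left] at this
          linarith [this]
        have hexp : ⟪l⁻¹ • z - A v, z - (v : H)⟫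
            = l⁻¹ * ⟪z, z⟫ - l⁻¹ * ⟪z, (v : H)⟫ - ⟪A v, z⟫ + ⟪A v, (v : H)⟫ := by
          rw [inner_sub_left, inner_sub_right, inner_sub_right, real_inner_smul_left,
            real_inner_smul_left]
          ring
        have hsym : ⟪z, (v : H)⟫ = ⟪(v : H), z⟫ := real_inner_comm _ _
        rw [hexp, hsym, real_inner_self_eq_norm_sq]
        have h1' : l⁻¹ * ⟪(v : H), z⟫ = -⟪A v, z⟫ := by
          field_simp
          linarith
        have h4 : 0 ≤ ⟪A v, (v : H)⟫ := le_trans (by positivity) (hstrong v)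
        have h5 : 0 ≤ l⁻¹ * ‖z‖ ^ 2 := by positivity
        linarith
      obtain ⟨w, hwz, hwA⟩ := hmaxmono z (l⁻¹ • z) hrel
      have hSw : S w = (2:ℝ) • z := by
        rw [hS, hwz, hwA, smul_smul, mul_inv_cancel₀ hl.ne', one_smul, two_smul]
      have := hz' w
      rw [hSw, real_inner_smul_left, real_inner_self_eq_norm_sq] at this
      have hz0 : ‖z‖ ^ 2 = 0 := by linarith
      simpa [pow_eq_zero_iff] using hz0
    intro y
    have : y ∈ LinearMap.range S := htop ▸ Submodule.mem_top
    exact this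
  -- resolvent J
  choose J hJ using hSsurj
  have hJlip : ∀ y y' : H, (1 + l * c) * ‖(J y : H) - (J y' : H)‖ ≤ ‖y - y'‖ := by
    intro y y'
    have := hSnorm (J y) (J y')
    rw [hJ y, hJ y'] at this
    exact this
  -- the contraction map
  set Φ : H → H := fun y => (J y : H) - l • 𝒥 ((J y : H) - h) with hΦ_def
  have hΦest : ∀ y y' : H, ‖Φ y - Φ y'‖ ≤ (Real.sqrt (1 + l ^ 2) / (1 + l * c)) * ‖y - y'‖ := by
    intro y y'
    set a : H := (J y : H) with ha
    set b : H := (J y' : H) with hb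
    have key : ‖Φ y - Φ y'‖ ^ 2 ≤ (1 + l ^ 2) * ‖a - b‖ ^ 2 := by
      have hΦeq : Φ y - Φ y' = (a - b) - l • (𝒥 (a - h) - 𝒥 (b - h)) := by
        simp [hΦ_def, ← ha, ← hb, smul_sub]
        abel
      rw [hΦeq, norm_sub_sq_real]
      have hm : 0 ≤ ⟪𝒥 (a - h) - 𝒥 (b - h), a - b⟫ := by
        have := h𝒥mono (a - h) (b - h)
        have heq : (a - h) - (b - h) = a - b := by abel
        rwa [heq] at this
      have hinner : 0 ≤ ⟪a - b, l • (𝒥 (a - h) - 𝒥 (b - h))⟫ := by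
        rw [real_inner_smul_right, real_inner_comm]
        positivity
      have hlipn : ‖𝒥 (a - h) - 𝒥 (b - h)‖ ≤ ‖a - b‖ := by
        have := h𝒥lip.dist_le_mul (a - h) (b - h)
        rw [dist_eq_norm, dist_eq_norm] at this
        have heq : (a - h) - (b - h) = a - b := by abel
        rw [heq] at this
        simpa using this
      have hns : ‖l • (𝒥 (a - h) - 𝒥 (b - h))‖ ≤ l * ‖a - b‖ := by
        rw [norm_smul, Real.norm_eq_abs, abs_of_pos hl]
        exact mul_le_mul_of_nonneg_left hlipn hl.le
      have hns2 : ‖l • (𝒥 (a - h) - 𝒥 (b - h))‖ ^ 2 ≤ (l * ‖a - b‖) ^ 2 :=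
        pow_le_pow_left₀ (norm_nonneg _) hns 2
      nlinarith [hinner, hns2]
    have h1 : ‖Φ y - Φ y'‖ ≤ Real.sqrt (1 + l ^ 2) * ‖a - b‖ := by
      have := Real.sqrt_le_sqrt key
      rwa [Real.sqrt_sq (norm_nonneg _), Real.sqrt_mul (by positivity),
        Real.sqrt_sq (norm_nonneg _)] at this
    have h2 : ‖a - b‖ ≤ ‖y - y'‖ / (1 + l * c) := by
      rw [le_div_iff₀ h1lc]
      have := hJlip y y'
      rw [← ha, ← hb] at this
      linarith
    calc ‖Φ y - Φ y'‖ ≤ Real.sqrt (1 + l ^ 2) * ‖a - b‖ := h1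
      _ ≤ Real.sqrt (1 + l ^ 2) * (‖y - y'‖ / (1 + l * c)) :=
          mul_le_mul_of_nonneg_left h2 (Real.sqrt_nonneg _)
      _ = (Real.sqrt (1 + l ^ 2) / (1 + l * c)) * ‖y - y'‖ := by ring
  -- contraction constant
  set K : NNReal := ⟨Real.sqrt (1 + l ^ 2) / (1 + l * c), by positivity⟩ with hK_def
  have hK1 : (K : ℝ) < 1 := by
    show Real.sqrt (1 + l ^ 2) / (1 + l * c) < 1
    rw [div_lt_one h1lc]
    have h1 : Real.sqrt (1 + l ^ 2) ≤ Real.sqrt (1 + l * c) := by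
      apply Real.sqrt_le_sqrt
      nlinarith
    have h2 : Real.sqrt (1 + l * c) < 1 + l * c := by
      rw [Real.sqrt_lt' h1lc]
      nlinarith [mul_pos hl hc]
    linarith
  have hΦlip : LipschitzWith K Φ := by
    apply LipschitzWith.of_dist_le_mul
    intro y y'
    rw [dist_eq_norm, dist_eq_norm]
    exact hΦest y y'
  have hcontr : ContractingWith K Φ := ⟨by exact_mod_cast hK1, hΦlip⟩
  haveI : Nonempty H := ⟨0⟩
  -- fixed point
  obtain ⟨y₀, hy₀⟩ : ∃ y₀, Φ y₀ = y₀ := ⟨hcontr.fixedPoint Φ, hcontr.fixedPoint_isFixedPt⟩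
  have h1 : (J y₀ : H) + l • A (J y₀) = y₀ := hJ y₀
  have h2 : (J y₀ : H) - l • 𝒥 ((J y₀ : H) - h) = y₀ := hy₀
  have h3 : l • (A (J y₀) + 𝒥 ((J y₀ : H) - h)) = 0 := by
    rw [smul_add]
    have e : ((J y₀ : H) + l • A (J y₀)) - ((J y₀ : H) - l • 𝒥 ((J y₀ : H) - h)) = y₀ - y₀ := by
      rw [h1, h2]
    rw [sub_self] at e
    rw [show l • A (J y₀) + l • 𝒥 ((J y₀ : H) - h)
        = ((J y₀ : H) + l • A (J y₀)) - ((J y₀ : H) - l • 𝒥 ((J y₀ : H) - h)) by abel, e]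
  have hsol : A (J y₀) + 𝒥 ((J y₀ : H) - h) = 0 := by
    rcases smul_eq_zero.mp h3 with h' | h'
    · exact absurd h' hl.ne'
    · exact h'
  refine ⟨J y₀, hsol, ?_⟩
  -- uniqueness
  intro μ hμ
  set ν : W := J y₀ with hν
  have hdiff : A μ - A ν = 𝒥 ((ν : H) - h) - 𝒥 ((μ : H) - h) := by
    have e1 : A μ = -𝒥 ((μ : H) - h) := eq_neg_of_add_eq_zero_left hμ
    have e2 : A ν = -𝒥 ((ν : H) - h) := eq_neg_of_add_eq_zero_left hsol
    rw [e1, e2]; abel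
  have h4 : ⟪A μ - A ν, (μ : H) - (ν : H)⟫ ≤ 0 := by
    rw [hdiff]
    have hmm := h𝒥mono ((μ : H) - h) ((ν : H) - h)
    have heq : ((μ : H) - h) - ((ν : H) - h) = (μ : H) - (ν : H) := by abel
    rw [heq] at hmm
    have hneg : ⟪𝒥 ((ν : H) - h) - 𝒥 ((μ : H) - h), (μ : H) - (ν : H)⟫
        = -⟪𝒥 ((μ : H) - h) - 𝒥 ((ν : H) - h), (μ : H) - (ν : H)⟫ := by
      rw [← inner_neg_left]
      congr 1
      abel
    rw [hneg]
    linarith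
  have h5 := hAsm μ ν
  have h6 : ‖(μ : H) - (ν : H)‖ ^ 2 ≤ 0 := by nlinarith
  have h7 : (μ : H) - (ν : H) = 0 := by
    have : ‖(μ : H) - (ν : H)‖ ^ 2 = 0 := le_antisymm h6 (by positivity)
    simpa [pow_eq_zero_iff] using this
  exact Subtype.ext (sub_eq_zero.mp h7)
end
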